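/- arXiv:2302.13030 — 2 statements merged into one kernel-verified Lean document; each statement's English description precedes it below -/
import Mathlib

section
/- (FRFT derivative formula) Let α ∈ ℝⁿ with no coordinate in πℤ, and let f be a Schwartz function. Then for each k ∈ {1,...,n} and all x ∈ ℝⁿ, F_α(e_{-α}(y) ∂/∂y_k [e_α(y) f(y)])(x) = 2πi x_k csc(α_k) F_α(f)(x). -/
open MeasureTheory Real SchwartzMap Filter
open scoped FourierTransform

noncomputable section

abbrev Rn (n : ℕ) := EuclideanSpace ℝ (Fin n)

/-- The chirp function `e_α(x) = exp(2πi Σₖ (cot αₖ / 2) xₖ²)`. -/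
def chirp {n : ℕ} (α : Rn n) (x : Rn n) : ℂ :=
  Complex.exp (2 * (π : ℂ) * Complex.I *
    ((∑ k, Real.cot (α k) / 2 * (x k) ^ 2 : ℝ) : ℂ))

/-- The constant `c(α) = ∏ₖ √(1 - i cot αₖ)`. -/
def cConst {n : ℕ} (α : Rn n) : ℂ :=
  ∏ k, (1 - Complex.I * (Real.cot (α k) : ℂ)) ^ ((1 : ℂ) / 2)

/-- The FRFT kernel `K_α(x,u)`. -/
def frftKernel {n : ℕ} (α : Rn n) (x u : Rn n) : ℂ :=
  ∏ k, (1 - Complex.I * (Real.cot (α k) : ℂ)) ^ ((1 : ℂ) / 2) *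
    Complex.exp (2 * (π : ℂ) * Complex.I *
      ((Real.cot (α k) / 2 * ((x k) ^ 2 + (u k) ^ 2)
        - x k * u k / Real.sin (α k) : ℝ) : ℂ))

/-- The multidimensional fractional Fourier transform. -/
def frft {n : ℕ} (α : Rn n) (f : Rn n → ℂ) (u : Rn n) : ℂ :=
  ∫ x, f x * frftKernel α x u

/-- `ũ = (u₁ csc α₁, ..., uₙ csc αₙ)`. -/
def tilde {n : ℕ} (α u : Rn n) : Rn n :=
  (EuclideanSpace.equiv (Fin n) ℝ).symm fun k => u k / Real.sin (α k)

/-- `γ(β) = π^{n/2} 2^β Γ(β/2) / Γ((n-β)/2)`. -/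
def gammaC (n : ℕ) (β : ℝ) : ℝ :=
  π ^ ((n : ℝ) / 2) * 2 ^ β * Real.Gamma (β / 2) / Real.Gamma (((n : ℝ) - β) / 2)

/-- The classical Riesz potential `I_β`. -/
def rieszPot (n : ℕ) (β : ℝ) (f : Rn n → ℂ) (x : Rn n) : ℂ :=
  ((1 / gammaC n β : ℝ) : ℂ) * ∫ y, f y / ((‖x - y‖ ^ ((n : ℝ) - β) : ℝ) : ℂ)

/-- The fractional Riesz potential related to chirp functions `I_β^α`. -/
def rieszPotChirp {n : ℕ} (α : Rn n) (β : ℝ) (f : Rn n → ℂ) (x : Rn n) : ℂ :=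
  ((1 / gammaC n β : ℝ) : ℂ) * chirp (-α) x *
    ∫ y, f y * chirp α y / ((‖x - y‖ ^ ((n : ℝ) - β) : ℝ) : ℂ)

/-- `c_n = Γ((n+1)/2)/π^{(n+1)/2}`. -/
def nConst (n : ℕ) : ℝ := Real.Gamma (((n : ℝ) + 1) / 2) / π ^ (((n : ℝ) + 1) / 2)

/-- The j-th fractional Riesz transform related to chirp functions (principal value). -/
def rieszTransChirp {n : ℕ} (α : Rn n) (j : Fin n) (f : Rn n → ℂ) (x : Rn n) : ℂ :=
  ((nConst n : ℝ) : ℂ) * chirp (-α) x *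
    limUnder (nhdsWithin (0 : ℝ) (Set.Ioi 0)) fun ε =>
      ∫ y in {y : Rn n | ε < dist x y},
        (((x j - y j) / ‖x - y‖ ^ ((n : ℝ) + 1) : ℝ) : ℂ) * f y * chirp α y

/-- Partial derivative in the k-th coordinate direction. -/
def partialD {n : ℕ} (k : Fin n) (g : Rn n → ℂ) (y : Rn n) : ℂ :=
  fderiv ℝ g y (EuclideanSpace.single k 1)

/-- `α` has no coordinate in `πℤ`. -/
def notPiZ {n : ℕ} (α : Rn n) : Prop := ∀ k, ∀ m : ℤ, α k ≠ m * π

/-!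
Writing the kernel as `c(α) e_α(u) e_α(y) 𝐞(-⟪y, ũ⟫)` shows `F_α(g)(u) = c(α) e_α(u) 𝓕(e_α g)(ũ)`.
For `g = e_{-α} ∂ₖ(e_α f)` the chirps cancel, leaving the ordinary Fourier transform of
`∂ₖ(e_α f)` at `ũ`. Since `e_α = exp(i · quadratic)` has temperate growth, `e_α f` is again a
Schwartz function, and the classical identity `𝓕(∂ₖ h)(ξ) = 2πi ξₖ 𝓕 h(ξ)` finishes the proof.
-/

open LineDeriv

theorem Real.cot_neg (x : ℝ) : cot (-x) = -cot x := by
  simp [cot_eq_cos_div_sin, div_neg]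

theorem iteratedDeriv_cexp_ofReal_mul_I (m : ℕ) :
    iteratedDeriv m (fun t : ℝ => Complex.exp (t * Complex.I)) =
      fun t : ℝ => Complex.I ^ m * Complex.exp (t * Complex.I) := by
  induction m with
  | zero => simp
  | succ m ih =>
    ext t
    have h : HasDerivAt (fun t : ℝ => Complex.I ^ m * Complex.exp (t * Complex.I))
        (Complex.I ^ m * (Complex.exp (t * Complex.I) * (1 * Complex.I))) t :=
      (((hasDerivAt_id t).ofReal_comp.mul_const Complex.I).cexp).const_mul _
    rw [iteratedDeriv_succ, ih, h.deriv]
    ring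

theorem hasTemperateGrowth_cexp_ofReal_mul_I :
    (fun t : ℝ => Complex.exp (t * Complex.I)).HasTemperateGrowth := by
  refine ⟨(Complex.ofRealCLM.contDiff.mul contDiff_const).cexp, fun m => ⟨0, 1, fun t => ?_⟩⟩
  rw [norm_iteratedFDeriv_eq_norm_iteratedDeriv, iteratedDeriv_cexp_ofReal_mul_I]
  simp [Complex.norm_exp_ofReal_mul_I]

theorem fourier_partialD {n : ℕ} (g : 𝓢(Rn n, ℂ)) (k : Fin n) (ξ : Rn n) :
    𝓕 (partialD k g) ξ = 2 * π * Complex.I * ξ k * 𝓕 (g : Rn n → ℂ) ξ := by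
  set v : Rn n := EuclideanSpace.single k 1
  have hinner : (inner ℝ · v : Rn n → ℝ).HasTemperateGrowth :=
    ((innerSL ℝ).flip v).hasTemperateGrowth
  have h := congrArg (· ξ) (fourier_lineDerivOp_eq g v)
  rw [smul_apply, smulLeftCLM_apply_apply hinner] at h
  change 𝓕 ⇑(∂_{v} g : 𝓢(Rn n, ℂ)) ξ = _
  rw [← fourier_coe, h]
  simp [v, EuclideanSpace.inner_single_right, fourier_coe, mul_assoc]

section Chirp

variable {n : ℕ}

theorem chirp_mul_chirp_neg (α y : Rn n) : chirp α y * chirp (-α) y = 1 := by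
  rw [chirp, chirp, ← Complex.exp_add, ← Complex.exp_zero]
  congr 1
  simp only [PiLp.neg_apply, Real.cot_neg, neg_div, neg_mul, Finset.sum_neg_distrib]
  push_cast
  ring

theorem hasTemperateGrowth_chirp (α : Rn n) : (chirp α).HasTemperateGrowth := by
  have hcoord (k : Fin n) : (fun y : Rn n => y k).HasTemperateGrowth :=
    (EuclideanSpace.proj k).hasTemperateGrowth
  have hphase : (fun y : Rn n => 2 * π * ∑ k, cot (α k) / 2 * (y k) ^ 2).HasTemperateGrowth := by
    fun_prop
  convert hasTemperateGrowth_cexp_ofReal_mul_I.comp hphase using 1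
  ext y
  simp only [chirp, Function.comp_apply]
  push_cast
  ring_nf

@[simp]
theorem tilde_apply (α u : Rn n) (k : Fin n) : tilde α u k = u k / sin (α k) := rfl

theorem frftKernel_eq (α y u : Rn n) :
    frftKernel α y u = cConst α * chirp α u *
      (Complex.exp (((-2 * π * inner ℝ y (tilde α u) : ℝ) : ℂ) * Complex.I) * chirp α y) := by
  have hinner : inner ℝ y (tilde α u) = ∑ j, y j * (u j / sin (α j)) := by
    simp [PiLp.inner_apply, mul_comm]
  simp only [frftKernel, cConst, chirp, Finset.prod_mul_distrib, ← Complex.exp_sum, mul_assoc,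
    ← Complex.exp_add, hinner]
  congr 2
  push_cast
  simp only [Finset.mul_sum, Finset.sum_mul, ← Finset.sum_add_distrib]
  exact Finset.sum_congr rfl fun j _ => by ring

theorem frft_eq_fourier (α : Rn n) (g : Rn n → ℂ) (x : Rn n) :
    frft α g x = cConst α * chirp α x * 𝓕 (fun y => chirp α y * g y) (tilde α x) := by
  simp only [frft, Real.fourier_eq', frftKernel_eq, smul_eq_mul, ← integral_const_mul]
  congr 1 with y
  ring

end Chirp

theorem frft_derivative_general {n : ℕ} (α : Rn n) (f : 𝓢(Rn n, ℂ))
    (k : Fin n) (x : Rn n) :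
    frft α (fun y => chirp (-α) y * partialD k (fun z => chirp α z * f z) y) x
      = 2 * (π : ℂ) * Complex.I * ((x k / Real.sin (α k) : ℝ) : ℂ) * frft α (⇑f) x := by
  set g : 𝓢(Rn n, ℂ) := smulLeftCLM ℂ (chirp α) f
  have hg : (fun z => chirp α z * f z) = ⇑g := by
    ext z
    simp [g, smulLeftCLM_apply_apply (hasTemperateGrowth_chirp α)]
  have hcancel : (fun y => chirp α y * (chirp (-α) y * partialD k g y)) = partialD k g := by
    ext y
    rw [← mul_assoc, chirp_mul_chirp_neg, one_mul]
  rw [frft_eq_fourier, frft_eq_fourier, hg, hcancel, fourier_partialD, tilde_apply]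
  ring

/-- FRFT derivative formula. -/
theorem frft_derivative {n : ℕ} (α : Rn n) (hα : notPiZ α) (f : 𝓢(Rn n, ℂ))
    (k : Fin n) (x : Rn n) :
    frft α (fun y => chirp (-α) y * partialD k (fun z => chirp α z * f z) y) x
      = 2 * (π : ℂ) * Complex.I * ((x k / Real.sin (α k) : ℝ) : ℂ) * frft α (⇑f) x :=
  frft_derivative_general α f k x
end
end

section
/- (Hardy–Littlewood–Sobolev for the fractional Riesz potential related to chirp functions, weak type) Let β ∈ (0,n) and α ∈ ℝⁿ with no coordinate in πℤ. There exists C > 0 such that for all f ∈ L¹(ℝⁿ) and all λ > 0, the Lebesgue measure of {x ∈ ℝⁿ : |I_β^α f(x)| > λ} is at most C (‖f‖_{L¹}/λ)^{n/(n-β)}. -/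
open MeasureTheory Real SchwartzMap Filter
open scoped FourierTransform

noncomputable section

open scoped ENNReal
open Metric Module

/-! Since `|e_α| = 1`, `|I_β^α f| ≤ γ(β)⁻¹ (|f| ⋆ |·|^{-s})` with `s = n - β`, so it suffices to
prove the weak type `(1, n/s)` bound for convolution with the Riesz kernel. Split the kernel at a
radius `δ`: the part outside the ball is bounded by `δ^{-s}`, so its convolution with `|f|` is at
most `δ^{-s}‖f‖₁`, while the part inside is integrable with integral `δ^{n-s}` times its integral
over the unit ball, so Chebyshev's inequality controls the level sets of its convolution.
Choosing `δ^{-s}‖f‖₁ = λ/2` balances the two and yields `(‖f‖₁/λ)^{n/s}`. -/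

section LConvolution

variable {G : Type*} [MeasurableSpace G] [AddGroup G] {μ : Measure G}

lemma lconvolution_eq_zero_of_ae_eq_zero {f : G → ℝ≥0∞} (hf : f =ᵐ[μ] 0) (g : G → ℝ≥0∞) :
    f ⋆ₗ[μ] g = 0 := by
  ext x
  rw [lconvolution_def, lintegral_congr_ae (g := 0) (hf.mono fun y hy => by simp [hy])]
  simp

variable [MeasurableAdd₂ G] [MeasurableNeg G] [μ.IsAddLeftInvariant] [SFinite μ]

lemma lintegral_lconvolution {f g : G → ℝ≥0∞} (hf : AEMeasurable f μ) (hg : AEMeasurable g μ) :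
    ∫⁻ x, (f ⋆ₗ[μ] g) x ∂μ = (∫⁻ x, f x ∂μ) * ∫⁻ x, g x ∂μ := by
  simp only [lconvolution_def]
  rw [lintegral_lintegral_swap (by fun_prop)]
  calc ∫⁻ y, ∫⁻ x, f y * g (-y + x) ∂μ ∂μ = ∫⁻ y, f y * ∫⁻ x, g x ∂μ ∂μ := by
        refine lintegral_congr fun y => ?_
        have hgy : AEMeasurable (fun x => g (-y + x)) μ :=
          hg.comp_quasiMeasurePreserving (measurePreserving_add_left μ (-y)).quasiMeasurePreserving
        rw [lintegral_const_mul'' _ hgy, lintegral_add_left_eq_self g (-y)]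
    _ = (∫⁻ x, f x ∂μ) * ∫⁻ x, g x ∂μ := lintegral_mul_const'' _ hf

lemma meas_lt_lconvolution_le {f k₁ k₂ : G → ℝ≥0∞} (hf : AEMeasurable f μ)
    (hk₁ : AEMeasurable k₁ μ) {c : ℝ≥0∞} (hk₂ : ∀ z, k₂ z ≤ c) {a : ℝ≥0∞} (ha₀ : a ≠ 0)
    (ha : a ≠ ∞) :
    μ {x | a + c * ∫⁻ y, f y ∂μ < (f ⋆ₗ[μ] (k₁ + k₂)) x}
      ≤ (∫⁻ y, f y ∂μ) * (∫⁻ z, k₁ z ∂μ) / a := by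
  have hsplit : ∀ x, (f ⋆ₗ[μ] (k₁ + k₂)) x = (f ⋆ₗ[μ] k₁) x + (f ⋆ₗ[μ] k₂) x := fun x => by
    simp only [lconvolution_def, Pi.add_apply, mul_add]
    exact lintegral_add_left' (by fun_prop) _
  have hfar : ∀ x, (f ⋆ₗ[μ] k₂) x ≤ c * ∫⁻ y, f y ∂μ := fun x =>
    calc (f ⋆ₗ[μ] k₂) x ≤ ∫⁻ y, f y * c ∂μ := lintegral_mono fun y => by gcongr; exact hk₂ _
      _ = c * ∫⁻ y, f y ∂μ := by rw [lintegral_mul_const'' _ hf, mul_comm]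
  calc μ {x | a + c * ∫⁻ y, f y ∂μ < (f ⋆ₗ[μ] (k₁ + k₂)) x}
      ≤ μ {x | a ≤ (f ⋆ₗ[μ] k₁) x} := measure_mono fun x hx => by
        simp only [Set.mem_ofPred_eq, hsplit] at hx ⊢
        have hfin : c * ∫⁻ y, f y ∂μ ≠ ∞ := ne_top_of_lt (lt_of_le_of_lt le_add_self hx)
        exact ((ENNReal.add_lt_add_iff_right hfin).1 (hx.trans_le (by gcongr; exact hfar x))).le
    _ ≤ (∫⁻ x, (f ⋆ₗ[μ] k₁) x ∂μ) / a :=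
        meas_ge_le_lintegral_div (aemeasurable_lconvolution hf hk₁) ha₀ ha
    _ = (∫⁻ y, f y ∂μ) * (∫⁻ z, k₁ z ∂μ) / a := by rw [lintegral_lconvolution hf hk₁]

end LConvolution

section RieszKernel

variable {E : Type*} [NormedAddCommGroup E]

def rieszKernel (s : ℝ) (z : E) : ℝ≥0∞ := ENNReal.ofReal (‖z‖ ^ (-s))

lemma indicator_compl_ball_rieszKernel_le {s δ : ℝ} (hs : 0 ≤ s) (hδ : 0 < δ) (z : E) :
    (ball 0 δ)ᶜ.indicator (rieszKernel s) z ≤ ENNReal.ofReal (δ ^ (-s)) := by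
  by_cases hz : z ∈ (ball (0 : E) δ)ᶜ
  · rw [Set.indicator_of_mem hz]
    have hδz : δ ≤ ‖z‖ := by simpa using hz
    exact ENNReal.ofReal_le_ofReal (Real.rpow_le_rpow_of_nonpos hδ hδz (neg_nonpos.2 hs))
  · simp [Set.indicator_of_notMem hz]

variable [MeasurableSpace E] [BorelSpace E]

lemma measurable_rieszKernel (s : ℝ) : Measurable (rieszKernel (E := E) s) := by
  unfold rieszKernel; fun_prop

variable [NormedSpace ℝ E] [FiniteDimensional ℝ E] (μ : Measure E) [μ.IsAddHaarMeasure]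

lemma setLIntegral_rieszKernel_ball_one_lt_top {s : ℝ} (hs : 0 < s) (hsd : s < finrank ℝ E) :
    ∫⁻ z in ball 0 1, rieszKernel s z ∂μ < ∞ := by
  have hd : 1 ≤ finrank ℝ E := by exact_mod_cast (hs.trans hsd)
  have : Nontrivial E := Module.nontrivial_of_finrank_pos hd
  have hint : IntegrableOn (fun z : E => ‖z‖ ^ (-s)) (ball 0 1) μ := by
    rw [integrableOn_fun_norm_addHaar μ (f := fun y => y ^ (-s))]
    have hexp : -1 < ((finrank ℝ E - 1 : ℕ) : ℝ) + -s := by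
      rw [Nat.cast_sub hd]; push_cast; linarith
    refine ((intervalIntegral.integrableOn_Ioo_rpow_iff one_pos).2 hexp).congr_fun
      (fun y hy => ?_) measurableSet_Ioo
    simp only [smul_eq_mul]
    rw [Real.rpow_add hy.1, Real.rpow_natCast]
  exact hint.setLIntegral_lt_top

lemma setLIntegral_rieszKernel_ball_one_ne_zero [Nontrivial E] {s : ℝ} (hs : 0 ≤ s) :
    ∫⁻ z in ball 0 1, rieszKernel s z ∂μ ≠ 0 := by
  have hone : ∀ᵐ z ∂μ.restrict (ball 0 1), 1 ≤ rieszKernel s z := by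
    filter_upwards [ae_restrict_mem measurableSet_ball, ae_restrict_of_ae (μ.ae_ne 0)]
      with z hz hz0
    exact ENNReal.one_le_ofReal.2 (Real.one_le_rpow_of_pos_of_le_one_of_nonpos
      (norm_pos_iff.2 hz0) (mem_ball_zero_iff.1 hz).le (neg_nonpos.2 hs))
  refine (lt_of_lt_of_le (measure_ball_pos μ (0 : E) one_pos) ?_).ne'
  simpa using lintegral_mono_ae hone

lemma setLIntegral_rieszKernel_ball (s : ℝ) {δ : ℝ} (hδ : 0 < δ) :
    ∫⁻ z in ball 0 δ, rieszKernel s z ∂μ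
      = ENNReal.ofReal (δ ^ ((finrank ℝ E : ℝ) - s)) * ∫⁻ z in ball 0 1, rieszKernel s z ∂μ := by
  have hpre : (δ • ·) ⁻¹' ball (0 : E) δ = ball 0 1 := by
    ext z
    simp [norm_smul, abs_of_pos hδ, hδ]
  have hscale : ∀ z : E, rieszKernel s (δ • z) = ENNReal.ofReal (δ ^ (-s)) * rieszKernel s z := by
    intro z
    rw [rieszKernel, rieszKernel, norm_smul, Real.norm_of_nonneg hδ.le,
      Real.mul_rpow hδ.le (norm_nonneg z), ENNReal.ofReal_mul (by positivity)]
  have hmap := setLIntegral_map (μ := μ) (measurableSet_ball (x := (0 : E)) (ε := δ))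
    (measurable_rieszKernel s) (measurable_const_smul δ)
  rw [Measure.map_addHaar_smul μ hδ.ne', Measure.restrict_smul, lintegral_smul_measure, hpre,
    funext hscale, lintegral_const_mul _ (measurable_rieszKernel s), smul_eq_mul] at hmap
  have hinv : ENNReal.ofReal (δ ^ finrank ℝ E) * ENNReal.ofReal |(δ ^ finrank ℝ E)⁻¹| = 1 := by
    rw [← ENNReal.ofReal_mul (by positivity), abs_of_pos (by positivity),
      mul_inv_cancel₀ (by positivity), ENNReal.ofReal_one]
  rw [← one_mul (∫⁻ z in ball 0 δ, _ ∂μ), ← hinv, mul_assoc, hmap,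
    ← mul_assoc, ← ENNReal.ofReal_mul (by positivity), ← Real.rpow_natCast,
    ← Real.rpow_add hδ, sub_eq_add_neg]

lemma meas_lt_lconvolution_rieszKernel_le_of_radius {s : ℝ} (hs : 0 ≤ s) {g : E → ℝ≥0∞}
    (hg : AEMeasurable g μ) {δ : ℝ} (hδ : 0 < δ) {a : ℝ≥0∞} (ha₀ : a ≠ 0) (ha : a ≠ ∞) :
    μ {x | a + ENNReal.ofReal (δ ^ (-s)) * ∫⁻ y, g y ∂μ < (g ⋆ₗ[μ] rieszKernel s) x}
      ≤ (∫⁻ y, g y ∂μ) * (ENNReal.ofReal (δ ^ ((finrank ℝ E : ℝ) - s))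
          * ∫⁻ z in ball 0 1, rieszKernel s z ∂μ) / a := by
  rw [← setLIntegral_rieszKernel_ball μ s hδ, ← lintegral_indicator measurableSet_ball]
  conv_lhs => rw [← Set.indicator_self_add_compl (ball 0 δ) (rieszKernel s)]
  exact meas_lt_lconvolution_le hg
    ((measurable_rieszKernel s).indicator measurableSet_ball).aemeasurable
    (indicator_compl_ball_rieszKernel_le hs hδ) ha₀ ha

lemma meas_lt_lconvolution_rieszKernel_le {s : ℝ} (hs : 0 < s) {g : E → ℝ≥0∞}
    (hg : AEMeasurable g μ) {N l : ℝ} (hgN : ∫⁻ y, g y ∂μ ≤ ENNReal.ofReal N) (hl : 0 < l) :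
    μ {x | ENNReal.ofReal l < (g ⋆ₗ[μ] rieszKernel s) x}
      ≤ (∫⁻ z in ball 0 1, rieszKernel s z ∂μ)
        * ENNReal.ofReal ((2 * N / l) ^ ((finrank ℝ E : ℝ) / s)) := by
  rcases eq_or_ne (∫⁻ y, g y ∂μ) 0 with hg0 | hg0
  · simp [lconvolution_eq_zero_of_ae_eq_zero ((lintegral_eq_zero_iff' hg).1 hg0)]
  have hN : 0 < N := ENNReal.ofReal_pos.1 (lt_of_lt_of_le (pos_iff_ne_zero.2 hg0) hgN)
  set d : ℝ := (finrank ℝ E : ℝ)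
  set R : ℝ := 2 * N / l with hRdef
  have hR : 0 < R := by positivity
  -- the radius at which the far part of the kernel contributes at most `l / 2`
  set δ : ℝ := R ^ s⁻¹
  have hδ : 0 < δ := by positivity
  have hδs : δ ^ (-s) = R⁻¹ := by
    rw [← Real.rpow_mul hR.le, inv_mul_eq_div, neg_div, div_self hs.ne', Real.rpow_neg_one]
  have hlevel : ENNReal.ofReal (l / 2) + ENNReal.ofReal (δ ^ (-s)) * ∫⁻ y, g y ∂μ
      ≤ ENNReal.ofReal l :=
    calc _ ≤ ENNReal.ofReal (l / 2) + ENNReal.ofReal (δ ^ (-s)) * ENNReal.ofReal N := by gcongr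
      _ = ENNReal.ofReal l := by
        rw [← ENNReal.ofReal_mul (by positivity), ← ENNReal.ofReal_add (by positivity)
          (by positivity), hδs, hRdef]
        congr 1
        field_simp
        ring
  have hexp : N * δ ^ (d - s) / (l / 2) = R ^ (d / s) := by
    rw [← Real.rpow_mul hR.le, show d / s = 1 + s⁻¹ * (d - s) by field_simp; ring,
      Real.rpow_add hR, Real.rpow_one, mul_div_right_comm, hRdef]
    field_simp
  calc μ {x | ENNReal.ofReal l < (g ⋆ₗ[μ] rieszKernel s) x}
      ≤ μ {x | ENNReal.ofReal (l / 2) + ENNReal.ofReal (δ ^ (-s)) * ∫⁻ y, g y ∂μ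
          < (g ⋆ₗ[μ] rieszKernel s) x} := measure_mono fun x hx => hlevel.trans_lt hx
    _ ≤ ENNReal.ofReal N * (ENNReal.ofReal (δ ^ (d - s)) * ∫⁻ z in ball 0 1, rieszKernel s z ∂μ)
          / ENNReal.ofReal (l / 2) := by
        grw [meas_lt_lconvolution_rieszKernel_le_of_radius μ hs.le hg hδ (by simpa using hl)
          ENNReal.ofReal_ne_top, hgN]
    _ = (∫⁻ z in ball 0 1, rieszKernel s z ∂μ) * ENNReal.ofReal (R ^ (d / s)) := by
        rw [← hexp, ENNReal.ofReal_div_of_pos (x := N * _) (by positivity),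
          ENNReal.ofReal_mul hN.le]
        simp only [div_eq_mul_inv]
        ring

end RieszKernel

lemma norm_chirp {n : ℕ} (α x : Rn n) : ‖chirp α x‖ = 1 := by
  rw [chirp, show 2 * (π : ℂ) * Complex.I * ((∑ k, Real.cot (α k) / 2 * (x k) ^ 2 : ℝ) : ℂ)
      = ((2 * π * ∑ k, Real.cot (α k) / 2 * (x k) ^ 2 : ℝ) : ℂ) * Complex.I by push_cast; ring,
    Complex.norm_exp_ofReal_mul_I]

lemma gammaC_pos {n : ℕ} {β : ℝ} (hβ : 0 < β) (hβn : β < n) : 0 < gammaC n β := by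
  have h₁ := Real.Gamma_pos_of_pos (half_pos hβ)
  have h₂ := Real.Gamma_pos_of_pos (half_pos (sub_pos.2 hβn))
  unfold gammaC
  positivity

lemma enorm_rieszPotChirp_le {n : ℕ} (α : Rn n) (β : ℝ) (f : Rn n → ℂ) (x : Rn n) :
    ‖rieszPotChirp α β f x‖ₑ
      ≤ ‖1 / gammaC n β‖ₑ * ((fun y => ‖f y‖ₑ) ⋆ₗ rieszKernel ((n : ℝ) - β)) x := by
  have henorm_real : ∀ r : ℝ, ‖(r : ℂ)‖ₑ = ‖r‖ₑ := fun r => by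
    rw [← enorm_norm, Complex.norm_real, enorm_norm]
  have henorm_chirp : ∀ α y : Rn n, ‖chirp α y‖ₑ = 1 := fun α y => by
    rw [← enorm_norm, norm_chirp, enorm_one]
  have hintegrand : ∀ y, ‖f y * chirp α y / ((‖x - y‖ ^ ((n : ℝ) - β) : ℝ) : ℂ)‖ₑ
      = ‖f y‖ₑ * rieszKernel ((n : ℝ) - β) (-y + x) := fun y => by
    rw [div_eq_mul_inv, ← Complex.ofReal_inv, ← Real.rpow_neg (norm_nonneg _), enorm_mul,
      enorm_mul, henorm_chirp, mul_one, henorm_real, Real.enorm_of_nonneg (by positivity),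
      neg_add_eq_sub, rieszKernel]
  rw [rieszPotChirp, enorm_mul, enorm_mul, henorm_chirp, mul_one, henorm_real, lconvolution_def]
  gcongr
  exact (enorm_integral_le_lintegral_enorm _).trans_eq (lintegral_congr hintegrand)

lemma setOf_lt_norm_rieszPotChirp_subset {n : ℕ} (α : Rn n) {β : ℝ} (hγ : 0 < gammaC n β)
    (f : Rn n → ℂ) {l : ℝ} (hl : 0 ≤ l) :
    {x | l < ‖rieszPotChirp α β f x‖}
      ⊆ {x | ENNReal.ofReal (gammaC n β * l)
          < ((fun y => ‖f y‖ₑ) ⋆ₗ rieszKernel ((n : ℝ) - β)) x} := by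
  intro x hx
  rw [Set.mem_ofPred_eq, ENNReal.ofReal_mul hγ.le]
  calc ENNReal.ofReal (gammaC n β) * ENNReal.ofReal l
      < ENNReal.ofReal (gammaC n β) * ‖rieszPotChirp α β f x‖ₑ := by
        rw [← ofReal_norm]
        exact ENNReal.mul_lt_mul_right (by simpa using hγ) ENNReal.ofReal_ne_top
          ((ENNReal.ofReal_lt_ofReal_iff_of_nonneg hl).2 hx)
    _ ≤ ((fun y => ‖f y‖ₑ) ⋆ₗ rieszKernel ((n : ℝ) - β)) x := by
        grw [enorm_rieszPotChirp_le α β f x, Real.enorm_of_nonneg (by positivity), ← mul_assoc,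
          ← ENNReal.ofReal_mul hγ.le, mul_one_div_cancel hγ.ne', ENNReal.ofReal_one, one_mul]

theorem rieszPotChirp_HLS_weak_general {n : ℕ} (β : ℝ) (hβ : 0 < β) (hβn : β < n)
    (α : Rn n) :
    ∃ C > 0, ∀ f : Rn n → ℂ, Integrable f → ∀ l : ℝ, 0 < l →
      volume {x : Rn n | l < ‖rieszPotChirp α β f x‖}
        ≤ ENNReal.ofReal (C * (((∫ y, ‖f y‖) / l) ^ ((n : ℝ) / ((n : ℝ) - β)))) := by
  have hs : 0 < (n : ℝ) - β := sub_pos.2 hβn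
  have hdim : (finrank ℝ (Rn n) : ℝ) = n := by rw [finrank_euclideanSpace_fin]
  have : Nontrivial (Rn n) :=
    Module.nontrivial_of_finrank_pos
      (by rw [finrank_euclideanSpace_fin]; exact_mod_cast hβ.trans hβn)
  have hγ := gammaC_pos hβ hβn
  set A := ∫⁻ z in ball (0 : Rn n) 1, rieszKernel ((n : ℝ) - β) z
  have hA_fin : A < ∞ := setLIntegral_rieszKernel_ball_one_lt_top volume hs (by rw [hdim]; linarith)
  have hA : 0 < A.toReal :=
    ENNReal.toReal_pos (setLIntegral_rieszKernel_ball_one_ne_zero volume hs.le) hA_fin.ne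
  refine ⟨A.toReal * (2 / gammaC n β) ^ ((n : ℝ) / ((n : ℝ) - β)), by positivity,
    fun f hf l hl => ?_⟩
  calc volume {x | l < ‖rieszPotChirp α β f x‖}
      ≤ A * ENNReal.ofReal ((2 * (∫ y, ‖f y‖) / (gammaC n β * l)) ^ ((n : ℝ) / ((n : ℝ) - β))) := by
        grw [setOf_lt_norm_rieszPotChirp_subset α hγ f hl.le]
        simpa only [hdim] using meas_lt_lconvolution_rieszKernel_le volume hs
          hf.aemeasurable.enorm (ofReal_integral_norm_eq_lintegral_enorm hf).ge (mul_pos hγ hl)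
    _ = _ := by
        rw [mul_assoc, ENNReal.ofReal_mul ENNReal.toReal_nonneg, ENNReal.ofReal_toReal hA_fin.ne,
          ← Real.mul_rpow (by positivity)
            (div_nonneg (integral_nonneg fun _ => norm_nonneg _) hl.le)]
        congr 3
        field_simp

/-- Hardy–Littlewood–Sobolev for `I_β^α`, weak type. -/
theorem rieszPotChirp_HLS_weak {n : ℕ} (β : ℝ) (hβ : 0 < β) (hβn : β < n)
    (α : Rn n) (hα : notPiZ α) :
    ∃ C > 0, ∀ f : Rn n → ℂ, Integrable f → ∀ l : ℝ, 0 < l →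
      volume {x : Rn n | l < ‖rieszPotChirp α β f x‖}
        ≤ ENNReal.ofReal (C * (((∫ y, ‖f y‖) / l) ^ ((n : ℝ) / ((n : ℝ) - β)))) :=
  rieszPotChirp_HLS_weak_general β hβ hβn α
end
end
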